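/- Let d ≥ 1, λ ≥ 0, K ≥ 0, and let φ : ℝ^d → ℝ be K-Lipschitz and λ-concave. Fix t > 0 and set ψ_t(y) = ‖y‖²/2 + t·φ(y), ψ_t*(x) = sup_y (⟨x,y⟩ − ψ_t(y)), and ψ_t**(y) = sup_x (⟨x,y⟩ − ψ_t*(x)). Then ψ_t** is (1+λt)-concave, i.e. y ↦ ψ_t**(y) − ((1+λt)/2)‖y‖² is concave on ℝ^d. -/

import Mathlib

open scoped RealInnerProductSpace
noncomputable section

/-- Legendre transform: `f*(x) = sup_y (⟨x,y⟩ − f(y))`. -/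
def conj {d : ℕ} (f : EuclideanSpace ℝ (Fin d) → ℝ)
    (x : EuclideanSpace ℝ (Fin d)) : ℝ :=
  ⨆ y : EuclideanSpace ℝ (Fin d), (⟪x, y⟫ - f y)

/-- `ψ_t(y) = ‖y‖²/2 + t φ(y)`. -/
def psiFun {d : ℕ} (φ : EuclideanSpace ℝ (Fin d) → ℝ) (t : ℝ)
    (y : EuclideanSpace ℝ (Fin d)) : ℝ :=
  ‖y‖ ^ 2 / 2 + t * φ y

/-!
Put c = 1 + λt, so that ψ_t − (c/2)‖·‖² = t (φ − (λ/2)‖·‖²) is concave. Completing the square,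
⟪x, y⟫ − (c/2)‖y‖² − ‖x‖²/(2c) = −‖c y − x‖²/(2c). After the substitution u = c y − x this
exhibits ψ_t*(x) − ‖x‖²/(2c) as a supremum over u of convex functions of x, hence convex. The same
square exhibits ψ_t**(y) − (c/2)‖y‖² as the supremum over x of a function jointly concave in (x, y),
and maximizing a jointly concave function over one variable leaves a concave function of the other.
ψ_t* is finite because ψ_t grows quadratically while tφ is Lipschitz.
-/

open Set

section Supremum

variable {E F : Type*} [AddCommGroup E] [Module ℝ E] [AddCommGroup F] [Module ℝ F]

theorem convexOn_ciSup {ι : Sort*} [Nonempty ι] {s : Set E} {f : ι → E → ℝ}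
    (hf : ∀ i, ConvexOn ℝ s (f i)) (hbdd : ∀ x ∈ s, BddAbove (range fun i => f i x)) :
    ConvexOn ℝ s fun x => ⨆ i, f i x := by
  refine ⟨(hf (Classical.arbitrary ι)).1, fun x hx y hy a b ha hb hab => ciSup_le fun i => ?_⟩
  show f i _ ≤ a * (⨆ i, f i x) + b * ⨆ i, f i y
  calc f i (a • x + b • y) ≤ a * f i x + b * f i y := (hf i).2 hx hy ha hb hab
    _ ≤ a * (⨆ i, f i x) + b * ⨆ i, f i y := by
      gcongr
      exacts [le_ciSup (hbdd x hx) i, le_ciSup (hbdd y hy) i]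

theorem ConcaveOn.ciSup_fst {G : E × F → ℝ} (hG : ConcaveOn ℝ univ G)
    (hbdd : ∀ y, BddAbove (range fun x => G (x, y))) :
    ConcaveOn ℝ univ fun y => ⨆ x, G (x, y) := by
  refine ⟨convex_univ, fun y₁ _ y₂ _ a b ha hb hab => ?_⟩
  simp only [smul_eq_mul]
  rw [Real.mul_iSup_of_nonneg ha, Real.mul_iSup_of_nonneg hb]
  refine ciSup_add_ciSup_le fun x₁ x₂ => ?_
  calc a * G (x₁, y₁) + b * G (x₂, y₂) ≤ G (a • (x₁, y₁) + b • (x₂, y₂)) :=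
        hG.2 trivial trivial ha hb hab
    _ = G (a • x₁ + b • x₂, a • y₁ + b • y₂) := by simp
    _ ≤ ⨆ x, G (x, a • y₁ + b • y₂) := le_ciSup (hbdd _) _

end Supremum

theorem inner_sub_half_sq_eq {E : Type*} [NormedAddCommGroup E] [InnerProductSpace ℝ E]
    {c : ℝ} (hc : c ≠ 0) (x y : E) :
    ⟪x, y⟫ - c / 2 * ‖x‖ ^ 2 - c⁻¹ / 2 * ‖y‖ ^ 2 = -(c⁻¹ / 2 * ‖c • x - y‖ ^ 2) := by
  rw [norm_sub_sq_real, real_inner_smul_left, norm_smul, mul_pow, Real.norm_eq_abs, sq_abs]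
  field_simp
  ring

section Conjugate

variable {d : ℕ}

theorem inner_sub_le_conj {f : EuclideanSpace ℝ (Fin d) → ℝ} {x : EuclideanSpace ℝ (Fin d)}
    (hbdd : BddAbove (range fun y => ⟪x, y⟫ - f y)) (y : EuclideanSpace ℝ (Fin d)) :
    ⟪x, y⟫ - f y ≤ conj f x :=
  le_ciSup hbdd y

theorem bddAbove_inner_sub_psiFun {φ : EuclideanSpace ℝ (Fin d) → ℝ} {K t : ℝ}
    (hLip : ∀ y z, |φ y - φ z| ≤ K * ‖y - z‖) (ht : 0 ≤ t) (x : EuclideanSpace ℝ (Fin d)) :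
    BddAbove (range fun y => ⟪x, y⟫ - psiFun φ t y) := by
  refine ⟨(‖x‖ + t * K) ^ 2 / 2 - t * φ 0, ?_⟩
  rintro _ ⟨y, rfl⟩
  have hφ : φ 0 - K * ‖y‖ ≤ φ y := by
    have := (abs_le.mp (hLip y 0)).1
    rw [sub_zero] at this
    linarith
  have htφ := mul_le_mul_of_nonneg_left hφ ht
  simp only [psiFun]
  nlinarith [real_inner_le_norm x y, sq_nonneg (‖x‖ + t * K - ‖y‖)]

theorem bddAbove_inner_sub_conj {f : EuclideanSpace ℝ (Fin d) → ℝ}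
    (hbdd : ∀ x, BddAbove (range fun y => ⟪x, y⟫ - f y)) (y : EuclideanSpace ℝ (Fin d)) :
    BddAbove (range fun x => ⟪y, x⟫ - conj f x) := by
  refine ⟨f y, ?_⟩
  rintro _ ⟨x, rfl⟩
  have := inner_sub_le_conj (hbdd x) y
  simp only
  rw [real_inner_comm]
  linarith

theorem convexOn_conj_sub_of_concaveOn_sub {f : EuclideanSpace ℝ (Fin d) → ℝ} {c : ℝ}
    (hc : c ≠ 0) (hf : ConcaveOn ℝ univ fun y => f y - c / 2 * ‖y‖ ^ 2)
    (hbdd : ∀ x, BddAbove (range fun y => ⟪x, y⟫ - f y)) :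
    ConvexOn ℝ univ fun x => conj f x - c⁻¹ / 2 * ‖x‖ ^ 2 := by
  set g := fun y => f y - c / 2 * ‖y‖ ^ 2
  have hterm : ∀ x u, -g (c⁻¹ • (x + u)) - c⁻¹ / 2 * ‖u‖ ^ 2
      = ⟪x, c⁻¹ • (x + u)⟫ - f (c⁻¹ • (x + u)) - c⁻¹ / 2 * ‖x‖ ^ 2 := by
    intro x u
    have := inner_sub_half_sq_eq hc (c⁻¹ • (x + u)) x
    rw [smul_inv_smul₀ hc, add_sub_cancel_left, real_inner_comm] at this
    simp only [g]
    linarith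
  have hsup : ∀ x, conj f x - c⁻¹ / 2 * ‖x‖ ^ 2
      = ⨆ u, (-g (c⁻¹ • (x + u)) - c⁻¹ / 2 * ‖u‖ ^ 2) := by
    intro x
    have hsurj : Function.Surjective fun u => c⁻¹ • (x + u) :=
      fun y => ⟨c • y - x, by simp [hc]⟩
    simp only [hterm]
    rw [conj, ciSup_sub (hbdd x), ← hsurj.iSup_comp]
  simp_rw [hsup]
  refine convexOn_ciSup (fun u => ?_) (fun x _ => ⟨conj f x - c⁻¹ / 2 * ‖x‖ ^ 2, ?_⟩)
  · let A : EuclideanSpace ℝ (Fin d) →ᵃ[ℝ] EuclideanSpace ℝ (Fin d) :=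
      c⁻¹ • (AffineMap.id ℝ _ + AffineMap.const ℝ _ u)
    refine ((hf.neg.comp_affineMap A).add_const (-(c⁻¹ / 2 * ‖u‖ ^ 2))).congr fun x _ => ?_
    simp [A, sub_eq_add_neg]
  · rintro _ ⟨u, rfl⟩
    simp only [hterm]
    linarith [inner_sub_le_conj (hbdd x) (c⁻¹ • (x + u))]

theorem concaveOn_conj_sub_of_convexOn_sub {f : EuclideanSpace ℝ (Fin d) → ℝ} {c : ℝ}
    (hc : 0 < c) (hf : ConvexOn ℝ univ fun x => f x - c / 2 * ‖x‖ ^ 2)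
    (hbdd : ∀ y, BddAbove (range fun x => ⟪y, x⟫ - f x)) :
    ConcaveOn ℝ univ fun y => conj f y - c⁻¹ / 2 * ‖y‖ ^ 2 := by
  set G : EuclideanSpace ℝ (Fin d) × EuclideanSpace ℝ (Fin d) → ℝ :=
    fun p => -(f p.1 - c / 2 * ‖p.1‖ ^ 2) - c⁻¹ / 2 * ‖c • p.1 - p.2‖ ^ 2
  have hG : ∀ x y, G (x, y) = ⟪y, x⟫ - f x - c⁻¹ / 2 * ‖y‖ ^ 2 := by
    intro x y
    have := inner_sub_half_sq_eq hc.ne' x y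
    rw [real_inner_comm] at this
    simp only [G]
    linarith
  have hsup : ∀ y, conj f y - c⁻¹ / 2 * ‖y‖ ^ 2 = ⨆ x, G (x, y) := by
    intro y
    simp only [hG]
    rw [conj, ciSup_sub (hbdd y)]
  simp_rw [hsup]
  refine ConcaveOn.ciSup_fst ?_ fun y => ⟨conj f y - c⁻¹ / 2 * ‖y‖ ^ 2, ?_⟩
  · have hnormSq : ConvexOn ℝ univ fun v : EuclideanSpace ℝ (Fin d) => ‖v‖ ^ 2 :=
      convexOn_univ_norm.pow (fun v _ => norm_nonneg v) 2
    have := (hf.comp_linearMap (LinearMap.fst ℝ _ _)).neg.add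
      ((hnormSq.comp_linearMap (c • LinearMap.fst ℝ _ _ - LinearMap.snd ℝ _ _)).smul
        (by positivity : 0 ≤ c⁻¹ / 2)).neg
    refine this.congr fun p _ => ?_
    simp [G, sub_eq_add_neg]
  · rintro _ ⟨x, rfl⟩
    simp only [hG]
    linarith [inner_sub_le_conj (hbdd y) x]

end Conjugate

theorem stmt17_general (d : ℕ) (lam K : ℝ) (hlam : 0 ≤ lam)
    (φ : EuclideanSpace ℝ (Fin d) → ℝ)
    (hLip : ∀ y z, |φ y - φ z| ≤ K * ‖y - z‖)
    (hConc : ConcaveOn ℝ Set.univ (fun y => φ y - lam / 2 * ‖y‖ ^ 2))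
    (t : ℝ) (ht : 0 < t) :
    ConcaveOn ℝ Set.univ
      (fun y => conj (conj (psiFun φ t)) y - (1 + lam * t) / 2 * ‖y‖ ^ 2) := by
  have hc : 0 < 1 + lam * t := by positivity
  have hψ : ConcaveOn ℝ univ fun y => psiFun φ t y - (1 + lam * t) / 2 * ‖y‖ ^ 2 := by
    refine (hConc.smul ht.le).congr fun y _ => ?_
    simp only [psiFun, smul_eq_mul]
    ring
  have hbdd := bddAbove_inner_sub_psiFun hLip ht.le
  have hconj := convexOn_conj_sub_of_concaveOn_sub hc.ne' hψ hbdd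
  simpa using
    concaveOn_conj_sub_of_convexOn_sub (inv_pos.2 hc) hconj (bddAbove_inner_sub_conj hbdd)

theorem stmt17 (d : ℕ) (hd : 1 ≤ d) (lam K : ℝ) (hlam : 0 ≤ lam) (hK : 0 ≤ K)
    (φ : EuclideanSpace ℝ (Fin d) → ℝ)
    (hLip : ∀ y z, |φ y - φ z| ≤ K * ‖y - z‖)
    (hConc : ConcaveOn ℝ Set.univ (fun y => φ y - lam / 2 * ‖y‖ ^ 2))
    (t : ℝ) (ht : 0 < t) :
    ConcaveOn ℝ Set.univ
      (fun y => conj (conj (psiFun φ t)) y - (1 + lam * t) / 2 * ‖y‖ ^ 2) :=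
  stmt17_general d lam K hlam φ hLip hConc t ht
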